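/- If P has a gluing decomposition P = Q1 * Q2 into two iposets and Q1, Q2 both avoid an induced 2+2 subposet, then P avoids an induced 2+2 subposet; equivalently, every element of C_2 (a gluing of parallel compositions of singleton iposets) is an interval order. -/

import Mathlib

/-- A poset with interfaces (iposet): a finite poset with injective monotone
source and target maps from discrete posets `Fin n`, `Fin m` whose images
consist of minimal, resp. maximal, elements. -/
structure Iposet where
  n : ℕ
  m : ℕ
  carrier : Type
  [str : PartialOrder carrier]
  [fin : Fintype carrier]
  s : Fin n → carrier
  t : Fin m → carrier
  s_inj : Function.Injective s
  t_inj : Function.Injective t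
  s_min : ∀ (i : Fin n) (x : carrier), ¬ x < s i
  t_max : ∀ (i : Fin m) (x : carrier), ¬ t i < x

attribute [instance] Iposet.str Iposet.fin

namespace Iposet

/-- The empty iposet `id_0`. -/
def IsEmptyIp (P : Iposet) : Prop := IsEmpty P.carrier ∧ P.n = 0 ∧ P.m = 0

/-- Singleton iposets: the underlying poset has exactly one point. -/
def IsSingletonIp (P : Iposet) : Prop := ∃ x : P.carrier, ∀ y : P.carrier, y = x

/-- Iposets with discrete underlying order. -/
def IsDiscrete (P : Iposet) : Prop := ∀ x y : P.carrier, x ≤ y → x = y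

/-- Isomorphism of iposets: an order isomorphism of the underlying posets
commuting with the interface maps. -/
def Iso (P Q : Iposet) : Prop :=
  ∃ (hn : P.n = Q.n) (hm : P.m = Q.m) (f : P.carrier ≃ Q.carrier),
    (∀ x y : P.carrier, x ≤ y ↔ f x ≤ f y) ∧
    (∀ i : Fin P.n, f (P.s i) = Q.s (Fin.cast hn i)) ∧
    (∀ i : Fin P.m, f (P.t i) = Q.t (Fin.cast hm i))

/-- `IsGluing P Q R` says that `R` is (a realization of) the gluing
composition `P * Q`: target interface points of `P` are identified with the
corresponding source interface points of `Q`, and every non-target point of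
`P` is placed below every non-source point of `Q`. -/
def IsGluing (P Q R : Iposet) : Prop :=
  ∃ (h : P.m = Q.n) (hn : R.n = P.n) (hm : R.m = Q.m)
    (ip : P.carrier → R.carrier) (iq : Q.carrier → R.carrier),
    Function.Injective ip ∧ Function.Injective iq ∧
    (∀ r : R.carrier, (∃ x, r = ip x) ∨ (∃ y, r = iq y)) ∧
    (∀ i : Fin P.m, ip (P.t i) = iq (Q.s (Fin.cast h i))) ∧
    (∀ (x : P.carrier) (y : Q.carrier), ip x = iq y →
      ∃ i : Fin P.m, x = P.t i ∧ y = Q.s (Fin.cast h i)) ∧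
    (∀ u v : R.carrier, u ≤ v ↔
      ((∃ x y : P.carrier, u = ip x ∧ v = ip y ∧ x ≤ y) ∨
       (∃ x y : Q.carrier, u = iq x ∧ v = iq y ∧ x ≤ y) ∨
       (∃ (x : P.carrier) (y : Q.carrier),
         u = ip x ∧ v = iq y ∧ x ∉ Set.range P.t ∧ y ∉ Set.range Q.s))) ∧
    (∀ i : Fin R.n, R.s i = ip (P.s (Fin.cast hn i))) ∧
    (∀ i : Fin R.m, R.t i = iq (Q.t (Fin.cast hm i)))

/-- `IsParallel P Q R` says that `R` is (a realization of) the parallel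
composition `P ⊗ Q`: the disjoint union of the underlying posets, with
concatenated interfaces. -/
def IsParallel (P Q R : Iposet) : Prop :=
  ∃ (hn : P.n + Q.n = R.n) (hm : P.m + Q.m = R.m)
    (ip : P.carrier → R.carrier) (iq : Q.carrier → R.carrier),
    Function.Injective ip ∧ Function.Injective iq ∧
    (∀ r : R.carrier, (∃ x, r = ip x) ∨ (∃ y, r = iq y)) ∧
    (∀ (x : P.carrier) (y : Q.carrier), ip x ≠ iq y) ∧
    (∀ u v : R.carrier, u ≤ v ↔
      ((∃ x y : P.carrier, u = ip x ∧ v = ip y ∧ x ≤ y) ∨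
       (∃ x y : Q.carrier, u = iq x ∧ v = iq y ∧ x ≤ y))) ∧
    (∀ i : Fin P.n, R.s (Fin.cast hn (Fin.castAdd Q.n i)) = ip (P.s i)) ∧
    (∀ j : Fin Q.n, R.s (Fin.cast hn (Fin.natAdd P.n j)) = iq (Q.s j)) ∧
    (∀ i : Fin P.m, R.t (Fin.cast hm (Fin.castAdd Q.m i)) = ip (P.t i)) ∧
    (∀ j : Fin Q.m, R.t (Fin.cast hm (Fin.natAdd P.m j)) = iq (Q.t j))

/-- The underlying poset is an interval order. -/
def IntvOrd (P : Iposet) : Prop :=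
  ∀ w x y z : P.carrier, w < y → x < z → w < z ∨ x < y

end Iposet
/-- `ParCl C` is the closure of `C` under finite parallel compositions
(including the empty one). -/
inductive ParCl (C : Iposet → Prop) : Iposet → Prop
  | of {P : Iposet} : C P → ParCl C P
  | empty {P : Iposet} : Iposet.IsEmptyIp P → ParCl C P
  | par {P Q R : Iposet} : ParCl C P → ParCl C Q → Iposet.IsParallel P Q R → ParCl C R

/-- `GlueCl C` is the closure of `C` under finite (nonempty) gluing compositions. -/
inductive GlueCl (C : Iposet → Prop) : Iposet → Prop
  | of {P : Iposet} : C P → GlueCl C P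
  | glue {P Q R : Iposet} : GlueCl C P → GlueCl C Q → Iposet.IsGluing P Q R → GlueCl C R

/-- The hierarchy `C_0 = S`, `C_{2n+1} = C_{2n}^⊗`, `C_{2n+2} = C_{2n+1}^*`. -/
def Cc : ℕ → Iposet → Prop
  | 0 => Iposet.IsSingletonIp
  | (k+1) => if k % 2 = 0 then ParCl (Cc k) else GlueCl (Cc k)

/-- The dual hierarchy `D_0 = S`, `D_{2n+1} = D_{2n}^*`, `D_{2n+2} = D_{2n+1}^⊗`. -/
def Dc : ℕ → Iposet → Prop
  | 0 => Iposet.IsSingletonIp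
  | (k+1) => if k % 2 = 0 then GlueCl (Dc k) else ParCl (Dc k)

/-- The underlying poset contains an induced 2+2: elements `a,b,c,d` with
`a < b`, `c < d` and no other strict relations. -/
def Has22 (P : Iposet) : Prop :=
  ∃ a b c d : P.carrier,
    a < b ∧ c < d ∧
    ¬ a ≤ c ∧ ¬ c ≤ a ∧ ¬ a ≤ d ∧ ¬ d ≤ a ∧
    ¬ b ≤ c ∧ ¬ c ≤ b ∧ ¬ b ≤ d ∧ ¬ d ≤ b

/-! In a gluing `Q1 * Q2` every strict relation lies in `Q1`, lies in `Q2`, or runs from a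
non-target point of `Q1` to a non-source point of `Q2`, and each non-target point of `Q1` lies
below each non-source point of `Q2`. A chain of an induced 2+2 inside `Q1` starts at a non-target
point, one inside `Q2` ends at a non-source point, and a crossing chain does both; as the two
chains are incomparable, they both lie in `Q1` or both in `Q2`. Parallel compositions of
singletons are discrete, hence contain no 2+2. -/

section TwoPlusTwo

variable {α β γ : Type*} [Preorder α] [Preorder β] [Preorder γ]

def IsTwoPlusTwo (a b c d : α) : Prop :=
  a < b ∧ c < d ∧
    ¬ a ≤ c ∧ ¬ c ≤ a ∧ ¬ a ≤ d ∧ ¬ d ≤ a ∧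
    ¬ b ≤ c ∧ ¬ c ≤ b ∧ ¬ b ≤ d ∧ ¬ d ≤ b

theorem IsTwoPlusTwo.of_map {f : α → γ} (hf : Monotone f) {a b c d : α} (hab : a < b)
    (hcd : c < d) (h : IsTwoPlusTwo (f a) (f b) (f c) (f d)) : IsTwoPlusTwo a b c d := by
  obtain ⟨-, -, hac, hca, had, hda, hbc, hcb, hbd, hdb⟩ := h
  exact ⟨hab, hcd, mt (@hf _ _) hac, mt (@hf _ _) hca, mt (@hf _ _) had, mt (@hf _ _) hda,
    mt (@hf _ _) hbc, mt (@hf _ _) hcb, mt (@hf _ _) hbd, mt (@hf _ _) hdb⟩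

theorem IsTwoPlusTwo.lift_of_glued {f : α → γ} {g : β → γ} (hf : Monotone f)
    (hg : Monotone g) {L U : Set γ} (hLU : ∀ u ∈ L, ∀ v ∈ U, u ≤ v)
    (hlt : ∀ u v, u < v →
      (u ∈ L ∧ ∃ x y, x < y ∧ f x = u ∧ f y = v) ∨
      (v ∈ U ∧ ∃ x y, x < y ∧ g x = u ∧ g y = v) ∨
      (u ∈ L ∧ v ∈ U))
    {a b c d : γ} (h : IsTwoPlusTwo a b c d) :
    (∃ x₁ x₂ x₃ x₄ : α, IsTwoPlusTwo x₁ x₂ x₃ x₄) ∨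
      (∃ y₁ y₂ y₃ y₄ : β, IsTwoPlusTwo y₁ y₂ y₃ y₄) := by
  obtain ⟨hab, hcd, -, -, had, -, -, hcb, -, -⟩ := id h
  have hLd : a ∈ L → d ∉ U := fun ha hd => had (hLU a ha d hd)
  have hLb : c ∈ L → b ∉ U := fun hc hb => hcb (hLU c hc b hb)
  rcases hlt a b hab with ⟨ha, x₁, x₂, h₁₂, rfl, rfl⟩ | ⟨hb, y₁, y₂, h₁₂, rfl, rfl⟩ | ⟨ha, hb⟩ <;>
    rcases hlt c d hcd with ⟨hc, x₃, x₄, h₃₄, rfl, rfl⟩ | ⟨hd, y₃, y₄, h₃₄, rfl, rfl⟩ |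
      ⟨hc, hd⟩
  · exact .inl ⟨x₁, x₂, x₃, x₄, h.of_map hf h₁₂ h₃₄⟩
  · exact (hLd ha hd).elim
  · exact (hLd ha hd).elim
  · exact (hLb hc hb).elim
  · exact .inr ⟨y₁, y₂, y₃, y₄, h.of_map hg h₁₂ h₃₄⟩
  · exact (hLb hc hb).elim
  · exact (hLb hc hb).elim
  · exact (hLd ha hd).elim
  · exact (hLd ha hd).elim

end TwoPlusTwo

namespace Iposet

theorem notMem_range_t_of_lt {P : Iposet} {x y : P.carrier} (h : x < y) : x ∉ Set.range P.t := by
  rintro ⟨i, rfl⟩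
  exact P.t_max i y h

theorem notMem_range_s_of_lt {P : Iposet} {x y : P.carrier} (h : x < y) : y ∉ Set.range P.s := by
  rintro ⟨i, rfl⟩
  exact P.s_min i x h

theorem IsGluing.not_has22 {Q₁ Q₂ P : Iposet} (hglue : IsGluing Q₁ Q₂ P) (h₁ : ¬ Has22 Q₁)
    (h₂ : ¬ Has22 Q₂) : ¬ Has22 P := by
  obtain ⟨-, -, -, ip, iq, -, -, -, -, -, hle, -, -⟩ := hglue
  have hip : Monotone ip := fun x y hxy => (hle _ _).2 (.inl ⟨x, y, rfl, rfl, hxy⟩)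
  have hiq : Monotone iq := fun x y hxy => (hle _ _).2 (.inr (.inl ⟨x, y, rfl, rfl, hxy⟩))
  have hcross : ∀ u ∈ ip '' (Set.range Q₁.t)ᶜ, ∀ v ∈ iq '' (Set.range Q₂.s)ᶜ, u ≤ v := by
    rintro _ ⟨x, hx, rfl⟩ _ ⟨y, hy, rfl⟩
    exact (hle _ _).2 (.inr (.inr ⟨x, y, rfl, rfl, hx, hy⟩))
  have hlt : ∀ u v, u < v →
      (u ∈ ip '' (Set.range Q₁.t)ᶜ ∧ ∃ x y, x < y ∧ ip x = u ∧ ip y = v) ∨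
      (v ∈ iq '' (Set.range Q₂.s)ᶜ ∧ ∃ x y, x < y ∧ iq x = u ∧ iq y = v) ∨
      (u ∈ ip '' (Set.range Q₁.t)ᶜ ∧ v ∈ iq '' (Set.range Q₂.s)ᶜ) := by
    intro u v huv
    rcases (hle u v).1 huv.le with ⟨x, y, rfl, rfl, hxy⟩ | ⟨x, y, rfl, rfl, hxy⟩ |
      ⟨x, y, rfl, rfl, hx, hy⟩
    · have hxy : x < y := hxy.lt_of_ne (by rintro rfl; exact huv.ne rfl)
      exact .inl ⟨⟨x, notMem_range_t_of_lt hxy, rfl⟩, x, y, hxy, rfl, rfl⟩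
    · have hxy : x < y := hxy.lt_of_ne (by rintro rfl; exact huv.ne rfl)
      exact .inr (.inl ⟨⟨y, notMem_range_s_of_lt hxy, rfl⟩, x, y, hxy, rfl, rfl⟩)
    · exact .inr (.inr ⟨⟨x, hx, rfl⟩, ⟨y, hy, rfl⟩⟩)
  rintro ⟨a, b, c, d, h⟩
  rcases IsTwoPlusTwo.lift_of_glued hip hiq hcross hlt (show IsTwoPlusTwo a b c d from h) with
    ⟨x₁, x₂, x₃, x₄, hx⟩ | ⟨y₁, y₂, y₃, y₄, hy⟩
  · exact h₁ ⟨x₁, x₂, x₃, x₄, hx⟩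
  · exact h₂ ⟨y₁, y₂, y₃, y₄, hy⟩

theorem IsDiscrete.not_has22 {P : Iposet} (h : P.IsDiscrete) : ¬ Has22 P := by
  rintro ⟨a, b, -, -, hab, -⟩
  exact hab.ne (h a b hab.le)

theorem IsSingletonIp.isDiscrete {P : Iposet} (h : P.IsSingletonIp) : P.IsDiscrete := by
  obtain ⟨z, hz⟩ := h
  intro x y _
  rw [hz x, hz y]

theorem IsEmptyIp.isDiscrete {P : Iposet} (h : P.IsEmptyIp) : P.IsDiscrete :=
  fun x => (h.1.false x).elim

theorem IsParallel.isDiscrete {P Q R : Iposet} (hpar : IsParallel P Q R) (hP : P.IsDiscrete)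
    (hQ : Q.IsDiscrete) : R.IsDiscrete := by
  obtain ⟨-, -, ip, iq, -, -, -, -, hle, -⟩ := hpar
  intro u v huv
  rcases (hle u v).1 huv with ⟨x, y, rfl, rfl, hxy⟩ | ⟨x, y, rfl, rfl, hxy⟩
  · rw [hP x y hxy]
  · rw [hQ x y hxy]

end Iposet

theorem ParCl.isDiscrete {C : Iposet → Prop} (hC : ∀ P, C P → P.IsDiscrete) {P : Iposet}
    (h : ParCl C P) : P.IsDiscrete := by
  induction h with
  | of hP => exact hC _ hP
  | empty hP => exact hP.isDiscrete
  | par _ _ hpar ihP ihQ => exact hpar.isDiscrete ihP ihQ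

theorem GlueCl.not_has22 {C : Iposet → Prop} (hC : ∀ P, C P → ¬ Has22 P) {P : Iposet}
    (h : GlueCl C P) : ¬ Has22 P := by
  induction h with
  | of hP => exact hC _ hP
  | glue _ _ hglue ihP ihQ => exact hglue.not_has22 ihP ihQ

/-- If `P = Q1 * Q2` and `Q1`, `Q2` avoid induced 2+2 subposets, then so does
`P`; equivalently, every element of `C_2` (a gluing of parallel compositions
of singleton iposets) is an interval order (avoids an induced 2+2). -/
theorem gluing_avoids_two_plus_two :
    (∀ Q1 Q2 P : Iposet, Iposet.IsGluing Q1 Q2 P →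
      ¬ Has22 Q1 → ¬ Has22 Q2 → ¬ Has22 P) ∧
    (∀ P : Iposet, GlueCl (ParCl Iposet.IsSingletonIp) P → ¬ Has22 P) :=
  ⟨fun _ _ _ hglue => hglue.not_has22,
    fun _ hP => hP.not_has22 fun _ hQ =>
      (hQ.isDiscrete fun _ => Iposet.IsSingletonIp.isDiscrete).not_has22⟩
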